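/- arXiv:2012.07069 — 3 statements merged into one kernel-verified Lean document; each statement's English description precedes it below -/
import Mathlib

section
/- Let {|v_x⟩}_{x=0}^{d-1} be an orthonormal basis of ℂ^d satisfying |⟨j|v_i⟩| = 1/d for i = j and |⟨j|v_i⟩| = √(d+1)/d for i ≠ j (with |j⟩ the standard basis). Define |η_x^a⟩ = Z^a|v_x⟩ for a = 0,...,d-1 and |η_x^d⟩ = |x⟩, and set M_x^a = (d/(d+1))|η_x^a⟩⟨η_x^a|. Then for each x, {M_x^a}_{a=0}^{d} is a valid POVM: each M_x^a is positive semidefinite and ∑_{a=0}^{d} M_x^a = 𝟙. -/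
open Matrix Complex BigOperators
open scoped ComplexOrder

noncomputable section

/-- The clock matrix `Z = ∑ᵢ ωⁱ |i⟩⟨i|` with `ω = exp(2πi/d)`. -/
def clockZ (d : ℕ) : Matrix (Fin d) (Fin d) ℂ :=
  Matrix.diagonal fun i => Complex.exp (2 * Real.pi * Complex.I / d) ^ (i : ℕ)

/-- The standard basis vector `|x⟩`. -/
def ket (d : ℕ) (x : Fin d) : Fin d → ℂ := fun j => if j = x then 1 else 0

/-- The vectors `|η_x^a⟩ = Zᵃ|v_x⟩` for `a < d` and `|η_x^d⟩ = |x⟩`. -/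
def eta (d : ℕ) (v : Fin d → Fin d → ℂ) (x : Fin d) (a : Fin (d + 1)) :
    Fin d → ℂ :=
  if a.val < d then (clockZ d ^ (a : ℕ)) *ᵥ v x else ket d x

/-- The `(d+1)`-outcome POVM elements `M_x^a = (d/(d+1))|η_x^a⟩⟨η_x^a|`. -/
def povmM (d : ℕ) (v : Fin d → Fin d → ℂ) (x : Fin d) (a : Fin (d + 1)) :
    Matrix (Fin d) (Fin d) ℂ :=
  ((d : ℂ) / (d + 1)) • vecMulVec (eta d v x a) (star (eta d v x a))

/-!
Conjugating a projector by the powers of the clock matrix `Z` and summing (twirling) kills its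
off-diagonal entries, by orthogonality of the characters `a ↦ ω^{(j-k)a}` of `ℤ/d`:
`∑_{a<d} Z^a |v⟩⟨v| Z^{-a} = d · diag(|v_j|²)`. Hence `∑_a M_x^a` is diagonal with entries
`(d/(d+1)) (d |⟨j|v_x⟩|² + δ_{jx})`, and the prescribed overlaps make `d |⟨j|v_x⟩|² + δ_{jx} = (d+1)/d`
for every `j`.
-/

theorem IsPrimitiveRoot.sum_range_pow_div_pow_pow {K : Type*} [Field K] {ζ : K} {d j k : ℕ}
    (hζ : IsPrimitiveRoot ζ d) (hj : j < d) (hk : k < d) :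
    ∑ a ∈ Finset.range d, (ζ ^ j / ζ ^ k) ^ a = if j = k then (d : K) else 0 := by
  have hζ0 : ζ ≠ 0 := hζ.ne_zero (by omega)
  split_ifs with hjk
  · simp [hjk, hζ0]
  · have hne : ζ ^ j / ζ ^ k ≠ 1 := fun h =>
      hjk (hζ.pow_inj hj hk (div_eq_one_iff_eq (pow_ne_zero k hζ0) |>.mp h))
    have hpow : (ζ ^ j / ζ ^ k) ^ d = 1 := by
      rw [div_pow, ← pow_mul, ← pow_mul, mul_comm j, mul_comm k, pow_mul, pow_mul,
        hζ.pow_eq_one, one_pow, one_pow, div_one]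
    rw [geom_sum_eq hne, hpow, sub_self, zero_div]

theorem IsPrimitiveRoot.sum_vecMulVec_diagonal_pow_mulVec {d : ℕ} {ζ : ℂ}
    (hζ : IsPrimitiveRoot ζ d) (u : Fin d → ℂ) :
    ∑ a : Fin d, vecMulVec (diagonal (fun i : Fin d => ζ ^ (i : ℕ)) ^ (a : ℕ) *ᵥ u)
        (star (diagonal (fun i : Fin d => ζ ^ (i : ℕ)) ^ (a : ℕ) *ᵥ u)) =
      (d : ℂ) • diagonal (fun j => (‖u j‖ : ℂ) ^ 2) := by
  rcases Nat.eq_zero_or_pos d with rfl | hd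
  · exact Subsingleton.elim _ _
  have hstar : star ζ = ζ⁻¹ := (inv_eq_conj (hζ.norm'_eq_one hd.ne')).symm
  ext j k
  have hsum := hζ.sum_range_pow_div_pow_pow j.isLt k.isLt
  simp only [← Fin.sum_univ_eq_sum_range, Fin.val_inj] at hsum
  simp only [Matrix.sum_apply, vecMulVec_apply, diagonal_pow, mulVec_diagonal, Pi.star_apply,
    star_mul', Pi.pow_apply, star_pow, hstar, Matrix.smul_apply, diagonal_apply,
    smul_eq_mul]
  calc ∑ a : Fin d, (ζ ^ (j : ℕ)) ^ (a : ℕ) * u j * ((ζ⁻¹ ^ (k : ℕ)) ^ (a : ℕ) * star (u k))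
      = u j * star (u k) * ∑ a : Fin d, (ζ ^ (j : ℕ) / ζ ^ (k : ℕ)) ^ (a : ℕ) := by
        rw [Finset.mul_sum]
        refine Finset.sum_congr rfl fun a _ => ?_
        rw [div_eq_mul_inv, mul_pow, inv_pow, inv_pow]
        ring
    _ = _ := by
        rw [hsum]
        split_ifs with hjk
        · subst hjk
          rw [← mul_conj', ← Complex.star_def]
          ring
        · ring

theorem vecMulVec_ket_star (d : ℕ) (x : Fin d) :
    vecMulVec (ket d x) (star (ket d x)) = diagonal (ket d x) := by
  ext j k
  simp only [vecMulVec_apply, diagonal_apply, ket, Pi.star_apply]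
  split_ifs <;> simp_all

theorem natCast_mul_norm_sq_add_ket {d : ℕ} {v : Fin d → Fin d → ℂ}
    (hovl : ∀ i j : Fin d,
      ‖v i j‖ = if i = j then (1 / d : ℝ) else Real.sqrt (d + 1) / d) (x j : Fin d) :
    (d : ℂ) * (‖v x j‖ : ℂ) ^ 2 + ket d x j = (d + 1) / d := by
  have hd : (d : ℂ) ≠ 0 := Nat.cast_ne_zero.mpr x.pos.ne'
  rw [hovl]
  by_cases hxj : x = j
  · simp only [hxj, if_true, ket]
    push_cast
    field_simp
    ring
  · have hsqrt : ((Real.sqrt (d + 1) : ℝ) : ℂ) ^ 2 = d + 1 := by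
      norm_cast
      exact Real.sq_sqrt (by positivity)
    simp only [hxj, if_false, ket, Ne.symm hxj]
    push_cast
    rw [div_pow, hsqrt]
    field_simp
    ring

theorem povmM_isPOVM_general (d : ℕ) (v : Fin d → Fin d → ℂ)
    (hovl : ∀ i j : Fin d,
      ‖v i j‖ = if i = j then (1 / d : ℝ) else Real.sqrt (d + 1) / d)
    (x : Fin d) :
    (∀ a : Fin (d + 1), (povmM d v x a).PosSemidef) ∧
      ∑ a : Fin (d + 1), povmM d v x a = 1 := by
  have hc : (0 : ℂ) ≤ d / (d + 1) := by positivity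
  refine ⟨fun a => (posSemidef_vecMulVec_self_star _).smul hc, ?_⟩
  have hζ : IsPrimitiveRoot (exp (2 * Real.pi * I / d)) d := isPrimitiveRoot_exp d x.pos.ne'
  calc ∑ a, povmM d v x a
      = ((d : ℂ) / (d + 1)) • (∑ a : Fin d, vecMulVec (clockZ d ^ (a : ℕ) *ᵥ v x)
          (star (clockZ d ^ (a : ℕ) *ᵥ v x)) + vecMulVec (ket d x) (star (ket d x))) := by
        simp [Fin.sum_univ_castSucc, povmM, _root_.eta, Finset.smul_sum, smul_add]
    _ = ((d : ℂ) / (d + 1)) • diagonal (fun j => (d : ℂ) * (‖v x j‖ : ℂ) ^ 2 + ket d x j) := by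
        rw [clockZ, hζ.sum_vecMulVec_diagonal_pow_mulVec, vecMulVec_ket_star, ← diagonal_smul,
          ← diagonal_add]
        rfl
    _ = 1 := by
        rw [← diagonal_smul, ← diagonal_one]
        congr 1
        funext j
        rw [Pi.smul_apply, natCast_mul_norm_sq_add_ket hovl, smul_eq_mul]
        have hd : (d : ℂ) ≠ 0 := Nat.cast_ne_zero.mpr x.pos.ne'
        field_simp

/-- If `{|v_x⟩}` is an orthonormal basis with `|⟨j|v_i⟩| = 1/d` for `i = j` and
`√(d+1)/d` for `i ≠ j`, then for each `x` the operators `{M_x^a}_{a=0}^d` form a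
valid POVM. -/
theorem povmM_isPOVM (d : ℕ) (hd : 2 ≤ d) (v : Fin d → Fin d → ℂ)
    (horth : ∀ i j, star (v i) ⬝ᵥ v j = if i = j then 1 else 0)
    (hovl : ∀ i j : Fin d,
      ‖v i j‖ = if i = j then (1 / d : ℝ) else Real.sqrt (d + 1) / d)
    (x : Fin d) :
    (∀ a : Fin (d + 1), (povmM d v x a).PosSemidef) ∧
      ∑ a : Fin (d + 1), povmM d v x a = 1 :=
  povmM_isPOVM_general d v hovl x
end
end

section
/- Let {|v_i⟩}_{i=0}^{d-1} be an orthonormal basis of ℂ^d satisfying |⟨v_i|U_{k,l}|v_i⟩| ≠ 0 for all i and all k,l ∈ {0,...,d-1}, where U_{k,l} = X^k Z^l. Then there exists a pair (k,l) ≠ (0,0) such that |⟨v_j|U_{k,l}|v_i⟩| < 1 for all i, j. -/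
/-!
Take `(k, l) = (0, 1)`, i.e. `U = Z`. Off the diagonal, Bessel's inequality for the orthonormal
pair `v i, v j` gives `|⟨v_j|Z|v_i⟩|² ≤ 1 - |⟨v_i|Z|v_i⟩|² < 1`. On the diagonal, equality
`|⟨v_i|Z|v_i⟩| = 1` in Cauchy–Schwarz would make `v i` an eigenvector of `Z`; since the
eigenvalues `ωᵐ` of `Z` are distinct, `v i` would then be supported on one coordinate, and so
`⟨v_i|X|v_i⟩ = 0`, against the hypothesis for `(k, l) = (1, 0)`.
-/

open Matrix Complex BigOperators

noncomputable section

/-- The shift matrix `X = ∑ᵢ |i+1 mod d⟩⟨i|`. -/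
def shiftX (d : ℕ) [NeZero d] : Matrix (Fin d) (Fin d) ℂ :=
  Matrix.of fun i j : Fin d => if i = j + 1 then 1 else 0

/-- The generalized Pauli unitary `U_{k,l} = Xᵏ Zˡ`. -/
def pauliU (d : ℕ) [NeZero d] (k l : ℕ) : Matrix (Fin d) (Fin d) ℂ :=
  shiftX d ^ k * clockZ d ^ l

open WithLp

section InnerProductSpace

variable {𝕜 E ι : Type*} [RCLike 𝕜] [NormedAddCommGroup E] [InnerProductSpace 𝕜 E]

local notation "⟪" x ", " y "⟫" => inner 𝕜 x y

theorem norm_inner_lt_one_of_forall_ne_smul {x y : E} (hx : ‖x‖ = 1) (hy : ‖y‖ = 1)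
    (h : ∀ c : 𝕜, y ≠ c • x) : ‖⟪x, y⟫‖ < 1 := by
  have hx0 : x ≠ 0 := norm_ne_zero_iff.mp (by simp [hx])
  have hy0 : y ≠ 0 := norm_ne_zero_iff.mp (by simp [hy])
  refine ((norm_inner_le_norm x y).trans_eq (by rw [hx, hy, one_mul])).lt_of_ne fun heq => ?_
  obtain ⟨r, -, hr⟩ := (norm_inner_eq_norm_iff hx0 hy0).mp (by rw [heq, hx, hy, one_mul])
  exact h r hr

theorem Orthonormal.norm_inner_lt_one_of_inner_ne_zero {e : ι → E} (he : Orthonormal 𝕜 e)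
    {y : E} (hy : ‖y‖ ≤ 1) {i j : ι} (hij : i ≠ j) (hi : ⟪e i, y⟫ ≠ 0) : ‖⟪e j, y⟫‖ < 1 := by
  classical
  have hBessel := he.sum_inner_products_le (s := {i, j}) y
  rw [Finset.sum_pair hij] at hBessel
  have hi_pos : 0 < ‖⟪e i, y⟫‖ ^ 2 := by positivity
  have hy_sq : ‖y‖ ^ 2 ≤ 1 := pow_le_one₀ (norm_nonneg y) hy
  exact (pow_lt_one_iff_of_nonneg (norm_nonneg _) two_ne_zero).mp (by linarith)

end InnerProductSpace

section Matrix

variable {𝕜 n ι : Type*} [RCLike 𝕜] [Fintype n]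

theorem inner_toLp_toLp_eq_star_dotProduct (x y : n → 𝕜) :
    inner 𝕜 (toLp 2 x) (toLp 2 y) = star x ⬝ᵥ y := by
  rw [EuclideanSpace.inner_toLp_toLp, dotProduct_comm]

theorem orthonormal_toLp_iff {v : ι → n → 𝕜} [DecidableEq ι] :
    Orthonormal 𝕜 (fun i => toLp 2 (v i)) ↔
      ∀ i j, star (v i) ⬝ᵥ v j = if i = j then 1 else 0 := by
  simp only [orthonormal_iff_ite, inner_toLp_toLp_eq_star_dotProduct]

theorem star_mulVec_dotProduct_mulVec_of_mem_unitaryGroup [DecidableEq n] {U : Matrix n n 𝕜}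
    (hU : U ∈ unitaryGroup n 𝕜) (x y : n → 𝕜) :
    star (U *ᵥ x) ⬝ᵥ (U *ᵥ y) = star x ⬝ᵥ y := by
  rw [star_mulVec, ← dotProduct_mulVec, mulVec_mulVec, ← star_eq_conjTranspose,
    mem_unitaryGroup_iff'.mp hU, one_mulVec]

theorem norm_toLp_mulVec_of_mem_unitaryGroup [DecidableEq n] {U : Matrix n n 𝕜}
    (hU : U ∈ unitaryGroup n 𝕜) (x : n → 𝕜) : ‖toLp 2 (U *ᵥ x)‖ = ‖toLp 2 x‖ := by
  rw [norm_eq_sqrt_re_inner (𝕜 := 𝕜), norm_eq_sqrt_re_inner (𝕜 := 𝕜),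
    inner_toLp_toLp_eq_star_dotProduct, inner_toLp_toLp_eq_star_dotProduct,
    star_mulVec_dotProduct_mulVec_of_mem_unitaryGroup hU]

theorem norm_star_dotProduct_mulVec_lt_one [DecidableEq n] {U : Matrix n n 𝕜}
    (hU : U ∈ unitaryGroup n 𝕜) {v : ι → n → 𝕜}
    (hv : Orthonormal 𝕜 (fun i => toLp 2 (v i))) {i : ι} (hi : star (v i) ⬝ᵥ (U *ᵥ v i) ≠ 0)
    (hU_eig : ∀ c : 𝕜, U *ᵥ v i ≠ c • v i) (j : ι) :
    ‖star (v j) ⬝ᵥ (U *ᵥ v i)‖ < 1 := by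
  have hUv : ‖toLp 2 (U *ᵥ v i)‖ = 1 := (norm_toLp_mulVec_of_mem_unitaryGroup hU _).trans (hv.1 i)
  rw [← inner_toLp_toLp_eq_star_dotProduct]
  rcases eq_or_ne i j with rfl | hij
  · refine norm_inner_lt_one_of_forall_ne_smul (hv.1 i) hUv fun c hc => hU_eig c ?_
    simpa using congrArg ofLp hc
  · rw [← inner_toLp_toLp_eq_star_dotProduct] at hi
    exact hv.norm_inner_lt_one_of_inner_ne_zero hUv.le hij hi

end Matrix

section Pauli

variable {d : ℕ}

theorem clockZ_mulVec_apply (x : Fin d → ℂ) (m : Fin d) :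
    (clockZ d *ᵥ x) m = exp (2 * Real.pi * I / d) ^ (m : ℕ) * x m := by
  simp [clockZ, mulVec_diagonal]

theorem clockZ_mem_unitaryGroup : clockZ d ∈ unitaryGroup (Fin d) ℂ := by
  rw [mem_unitaryGroup_iff', clockZ, star_eq_conjTranspose, diagonal_conjTranspose,
    diagonal_mul_diagonal, ← diagonal_one]
  congr 1
  funext m
  rw [Pi.star_apply, star_def, conj_mul', norm_pow, norm_exp]
  simp

theorem eq_of_clockZ_mulVec_eq_smul [NeZero d] {x : Fin d → ℂ} {c : ℂ}
    (hx : clockZ d *ᵥ x = c • x) {m m' : Fin d} (hm : x m ≠ 0) (hm' : x m' ≠ 0) : m = m' := by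
  have hω := isPrimitiveRoot_exp d (NeZero.ne d)
  have eigenvalue {m : Fin d} (hm : x m ≠ 0) : exp (2 * Real.pi * I / d) ^ (m : ℕ) = c :=
    mul_right_cancel₀ hm (by simpa [clockZ_mulVec_apply] using congrFun hx m)
  exact Fin.ext (hω.pow_inj m.isLt m'.isLt ((eigenvalue hm).trans (eigenvalue hm').symm))

theorem shiftX_mulVec_apply [NeZero d] (x : Fin d → ℂ) (m : Fin d) :
    (shiftX d *ᵥ x) m = x (m - 1) := by
  have hshift (j : Fin d) : m = j + 1 ↔ j = m - 1 := by rw [eq_sub_iff_add_eq, eq_comm]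
  simp [shiftX, mulVec, dotProduct, hshift]

theorem star_dotProduct_shiftX_mulVec_eq_zero [NeZero d] (hd : 2 ≤ d) {x : Fin d → ℂ}
    (hx : ∀ m m', x m ≠ 0 → x m' ≠ 0 → m = m') : star x ⬝ᵥ (shiftX d *ᵥ x) = 0 := by
  refine Finset.sum_eq_zero fun m _ => ?_
  rw [Pi.star_apply, shiftX_mulVec_apply]
  by_contra h
  obtain ⟨hm, hm'⟩ := mul_ne_zero_iff.mp h
  have h_one : (1 : Fin d) = 0 := sub_eq_self.mp (hx _ _ hm' (star_ne_zero.mp hm))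
  exact absurd (Fin.one_eq_zero_iff.mp h_one) (by omega)

end Pauli

/-- If an orthonormal basis `{|v_i⟩}` satisfies `|⟨v_i|U_{k,l}|v_i⟩| ≠ 0` for all
`i, k, l`, then there is a pair `(k,l) ≠ (0,0)` with `|⟨v_j|U_{k,l}|v_i⟩| < 1`
for all `i, j`. -/
theorem ic_strict_overlap (d : ℕ) [NeZero d] (hd : 2 ≤ d)
    (v : Fin d → Fin d → ℂ)
    (horth : ∀ i j, star (v i) ⬝ᵥ v j = if i = j then 1 else 0)
    (hic : ∀ (i : Fin d) (k l : Fin d),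
      ‖star (v i) ⬝ᵥ (pauliU d k l *ᵥ v i)‖ ≠ 0) :
    ∃ k l : Fin d, ¬(k = 0 ∧ l = 0) ∧ ∀ i j : Fin d,
      ‖star (v j) ⬝ᵥ (pauliU d k l *ᵥ v i)‖ < 1 := by
  let one : Fin d := ⟨1, hd⟩
  have hZ : pauliU d (0 : Fin d) one = clockZ d := by simp [pauliU, one]
  have hX : pauliU d one (0 : Fin d) = shiftX d := by simp [pauliU, one]
  have hZ_not_eig (i : Fin d) (c : ℂ) : clockZ d *ᵥ v i ≠ c • v i := fun hc => by
    have hX0 := star_dotProduct_shiftX_mulVec_eq_zero hd fun _ _ =>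
      eq_of_clockZ_mulVec_eq_smul hc
    exact hic i one 0 (by rw [hX, hX0, norm_zero])
  refine ⟨0, one, fun h => by simpa [one] using congrArg Fin.val h.2, fun i j => ?_⟩
  rw [hZ]
  exact norm_star_dotProduct_mulVec_lt_one clockZ_mem_unitaryGroup
    (orthonormal_toLp_iff.mpr horth) (norm_ne_zero_iff.mp (hZ ▸ hic i 0 one)) (hZ_not_eig i) j
end
end

section
/- There do not exist three orthonormal bases {|v_x^a⟩}_{a=0}^{2}, x = 0,1,2, of ℂ³ satisfying both: (1) ⟨v_x^a|v_{x'}^a⟩ = δ_{x,x'} for all a, x, x' (i.e., for each fixed a, {|v_x^a⟩}_x is also orthonormal), and (2) there exist a, a' with a ≠ a' such that |⟨v_x^a|v_{x'}^{a'}⟩| < 1 for all x, x'. -/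
open Matrix Complex BigOperators

/-!
Fix `a ≠ a'` and let `A`, `B` be the matrices whose columns are `v_x^a` and `v_x^{a'}`. By the
orthonormality of each `{v_x^a}_x` both are unitary, so `M = Aᴴ B`, with entries
`⟨v_x^a|v_{x'}^{a'}⟩`, is unitary; since each `{v_x^a}_a` is a basis, `M` has zero diagonal.
But a unitary `3 × 3` matrix with zero diagonal always has an entry of modulus one.
-/

namespace Matrix

section Gram

variable {α m n : Type*} [Fintype n] [Mul α] [AddCommMonoid α] [Star α]

theorem star_dotProduct_eq_conjTranspose_mul_apply (u w : m → n → α) (i j : m) :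
    star (u i) ⬝ᵥ w j = ((of u)ᵀᴴ * (of w)ᵀ) i j := by
  simp [mul_apply, dotProduct]

end Gram

variable {𝕜 n : Type*} [RCLike 𝕜] [Fintype n] [DecidableEq n]

theorem transpose_of_mem_unitaryGroup {u : n → n → 𝕜}
    (hu : ∀ i j, star (u i) ⬝ᵥ u j = if i = j then 1 else 0) :
    (of u)ᵀ ∈ unitaryGroup n 𝕜 := by
  rw [mem_unitaryGroup_iff', star_eq_conjTranspose]
  ext i j
  rw [← star_dotProduct_eq_conjTranspose_mul_apply, hu, one_apply]

theorem sum_norm_sq_row_eq_one_of_mem_unitaryGroup {U : Matrix n n 𝕜}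
    (hU : U ∈ unitaryGroup n 𝕜) (i : n) : ∑ j, ‖U i j‖ ^ 2 = 1 := by
  have hii : (U * star U) i i = 1 := by rw [mem_unitaryGroup_iff.mp hU, one_apply_eq]
  simp only [mul_apply, star_apply, ← starRingEnd_apply, RCLike.mul_conj] at hii
  exact_mod_cast hii

theorem sum_mul_star_row_eq_zero_of_mem_unitaryGroup {U : Matrix n n 𝕜}
    (hU : U ∈ unitaryGroup n 𝕜) {i k : n} (hik : i ≠ k) :
    ∑ j, U i j * star (U k j) = 0 := by
  have hik' : (U * star U) i k = 0 := by rw [mem_unitaryGroup_iff.mp hU, one_apply_ne hik]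
  simpa only [mul_apply, star_apply] using hik'

/-- Rows `0` and `1` can only overlap in column `2`, so one of these two entries vanishes and the
other off-diagonal entry of its row carries the whole row. -/
theorem exists_norm_eq_one_of_mem_unitaryGroup_of_diag_eq_zero {U : Matrix (Fin 3) (Fin 3) 𝕜}
    (hU : U ∈ unitaryGroup (Fin 3) 𝕜) (hdiag : ∀ i, U i i = 0) : ∃ i j, ‖U i j‖ = 1 := by
  have hoverlap : U 0 2 * star (U 1 2) = 0 := by
    simpa [Fin.sum_univ_three, hdiag] using
      sum_mul_star_row_eq_zero_of_mem_unitaryGroup hU (i := 0) (k := 1) (by decide)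
  have hrow0 := sum_norm_sq_row_eq_one_of_mem_unitaryGroup hU 0
  have hrow1 := sum_norm_sq_row_eq_one_of_mem_unitaryGroup hU 1
  simp only [Fin.sum_univ_three, hdiag] at hrow0 hrow1
  have hnorm {z : 𝕜} : ‖z‖ ^ 2 = 1 → ‖z‖ = 1 :=
    (pow_eq_one_iff_of_nonneg (norm_nonneg z) two_ne_zero).mp
  rcases mul_eq_zero.mp hoverlap with h02 | h12
  · exact ⟨0, 1, hnorm (by simpa [h02] using hrow0)⟩
  · exact ⟨1, 0, hnorm (by simpa [star_eq_zero.mp h12] using hrow1)⟩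

end Matrix

/-- There are no three orthonormal bases `{|v_x^a⟩}_a` (`x = 0,1,2`) of `ℂ³`
such that (1) for each `a`, `⟨v_x^a|v_{x'}^a⟩ = δ_{x,x'}`, and (2) for some
`a ≠ a'` all overlaps `|⟨v_x^a|v_{x'}^{a'}⟩|` are strictly less than one. -/
theorem no_qutrit_bases :
    ¬ ∃ v : Fin 3 → Fin 3 → (Fin 3 → ℂ),
      (∀ x, ∀ a a' : Fin 3, star (v x a) ⬝ᵥ v x a' = if a = a' then 1 else 0) ∧
      (∀ a, ∀ x x' : Fin 3, star (v x a) ⬝ᵥ v x' a = if x = x' then 1 else 0) ∧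
      (∃ a a' : Fin 3, a ≠ a' ∧
        ∀ x x' : Fin 3, ‖star (v x a) ⬝ᵥ v x' a'‖ < 1) := by
  rintro ⟨v, hbasis, hcolumns, a, a', hne, hlt⟩
  set A := (of fun x => v x a)ᵀ
  set B := (of fun x => v x a')ᵀ
  have hA : A ∈ unitaryGroup (Fin 3) ℂ := transpose_of_mem_unitaryGroup (hcolumns a)
  have hB : B ∈ unitaryGroup (Fin 3) ℂ := transpose_of_mem_unitaryGroup (hcolumns a')
  have hdiag (x : Fin 3) : (Aᴴ * B) x x = 0 := by
    rw [← star_dotProduct_eq_conjTranspose_mul_apply, hbasis, if_neg hne]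
  obtain ⟨x, x', hx⟩ := exists_norm_eq_one_of_mem_unitaryGroup_of_diag_eq_zero
    (Submonoid.mul_mem _ (Unitary.star_mem hA) hB) hdiag
  exact (hlt x x').ne (by rwa [star_dotProduct_eq_conjTranspose_mul_apply])
end
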